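/- arXiv:2005.05202 — 6 statements merged into one kernel-verified Lean document; each statement's English description precedes it below -/
import Mathlib

section
/- Let P be a real Banach space and P* its norm dual. A convex subset C of P* is weak*-closed if and only if, for every r > 0, the intersection of C with the closed ball of radius r in P* is weak*-closed. (Krein–Smulian theorem on weak*-closedness of convex sets.) -/
open Topology

/-- The weak-star topology on the norm dual of `P`. -/
noncomputable def weakStarTop (P : Type*) [NormedAddCommGroup P] [NormedSpace ℝ P] :
    TopologicalSpace (StrongDual ℝ P) :=
  inferInstanceAs (TopologicalSpace (WeakDual ℝ P))

/-!
Let `φ ∉ C`; after translating, `φ = 0`, and `C` misses a norm ball of some radius `r₀`. By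
Banach–Alaoglu, at stage `n` the functionals of `C` of norm `≤ (n + 2) r₀` lying in the polar of
the points chosen so far form a weak*-compact set on which the norm is `> (n + 1) r₀`, so finitely
many further points of norm `≤ ((n + 1) r₀)⁻¹` already push it out of the polar. All the chosen
points form a null family `x` whose polar misses `C`. Then `f ↦ (f (x i))ᵢ` maps `C` onto a convex
set of `ℓ^∞` missing the open unit ball and consisting of null sequences; a Hahn–Banach functional
separating the two is given on null sequences by a summable sequence `a`, hence is evaluation at
`∑ a i • x i`, and this weak*-continuous functional separates `φ` from `C`.
-/

open Filter Metric Set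
open scoped ENNReal

namespace lp

variable {ι : Type*} [DecidableEq ι]

theorem sum_single_apply {E : ι → Type*} [∀ i, NormedAddCommGroup (E i)] (p : ℝ≥0∞)
    (s : Finset ι) (f : ∀ i, E i) (j : ι) :
    (∑ i ∈ s, lp.single p i (f i)) j = if j ∈ s then f j else 0 := by
  rw [lp.coeFn_sum, Finset.sum_apply]
  exact Finset.sum_pi_single j f s

theorem hasSum_single_of_tendsto_cofinite {E : ι → Type*} [∀ i, NormedAddCommGroup (E i)]
    (y : lp E ∞) (hy : Tendsto (fun i => ‖y i‖) cofinite (𝓝 0)) :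
    HasSum (fun i => lp.single ∞ i (y i)) y := by
  rw [HasSum, Metric.tendsto_nhds]
  intro ε hε
  have hfin : {i | ε / 2 ≤ ‖y i‖}.Finite := by
    simpa [Real.dist_eq] using Metric.tendsto_nhds.1 hy (ε / 2) (half_pos hε)
  filter_upwards [eventually_ge_atTop hfin.toFinset] with s hs
  rw [dist_eq_norm]
  refine (lp.norm_le_of_forall_le (half_pos hε).le fun j => ?_).trans_lt (half_lt_self hε)
  rw [lp.coeFn_sub, Pi.sub_apply, sum_single_apply]
  by_cases hj : j ∈ s
  · simp [hj, (half_pos hε).le]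
  · have : ‖y j‖ < ε / 2 := by simpa using fun h => hj (hs (hfin.mem_toFinset.2 h))
    simpa [hj] using this.le

theorem single_eq_smul_single_one (p : ℝ≥0∞) (i : ι) (c : ℝ) :
    lp.single (E := fun _ : ι => ℝ) p i c = c • lp.single p i 1 := by
  rw [← lp.single_smul, smul_eq_mul, mul_one]

theorem summable_apply_single (g : lp (fun _ : ι => ℝ) ∞ →L[ℝ] ℝ) :
    Summable fun i => g (lp.single ∞ i 1) := by
  refine Summable.of_abs (summable_of_sum_le (c := ‖g‖) (fun i => abs_nonneg _) fun s => ?_)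
  set y := ∑ i ∈ s, lp.single ∞ i (SignType.sign (g (lp.single ∞ i 1)) : ℝ)
  have hy : ‖y‖ ≤ 1 := lp.norm_le_of_forall_le zero_le_one fun j => by
    rw [sum_single_apply]
    split_ifs
    · cases SignType.sign (g (lp.single ∞ j 1)) <;> simp
    · simp
  calc ∑ i ∈ s, |g (lp.single ∞ i 1)| = g y := by
        simp only [y, map_sum]
        exact Finset.sum_congr rfl fun i _ => by
          conv_rhs => rw [single_eq_smul_single_one, map_smul, smul_eq_mul, sign_mul_self]
    _ ≤ ‖g‖ * ‖y‖ := (le_abs_self _).trans (g.le_opNorm y)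
    _ ≤ ‖g‖ := mul_le_of_le_one_right (norm_nonneg g) hy

end lp

theorem tendsto_coe_iUnion_cofinite_zero {E : Type*} [SeminormedAddCommGroup E]
    {F : ℕ → Finset E} {c : ℕ → ℝ} (hc : Tendsto c atTop (𝓝 0)) (hF : ∀ n, ∀ x ∈ F n, ‖x‖ ≤ c n) :
    Tendsto ((↑) : (⋃ n, (F n : Set E)) → E) cofinite (𝓝 0) := by
  rw [Metric.tendsto_nhds]
  intro ε hε
  obtain ⟨N, hN⟩ := eventually_atTop.1 (hc.eventually (gt_mem_nhds hε))
  rw [eventually_cofinite]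
  refine (((finite_lt_nat N).biUnion fun n _ => (F n).finite_toSet).preimage
    Subtype.val_injective.injOn).subset ?_
  rintro ⟨x, hx⟩ hxε
  obtain ⟨n, hn⟩ := mem_iUnion.1 hx
  refine mem_iUnion₂.2 ⟨n, show n < N from ?_, hn⟩
  by_contra! hNn
  exact hxε (by simpa using (hF n x hn).trans_lt (hN n hNn))

theorem StrongDual.exists_norm_le_inv_one_lt_norm_apply {P : Type*} [NormedAddCommGroup P]
    [NormedSpace ℝ P] {f : StrongDual ℝ P} {ρ : ℝ} (hρ : 0 < ρ)
    (hf : ρ < ‖f‖) : ∃ x : P, ‖x‖ ≤ ρ⁻¹ ∧ 1 < ‖f x‖ := by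
  obtain ⟨y, hy1, hy⟩ := f.exists_lt_apply_of_lt_opNorm hf
  refine ⟨ρ⁻¹ • y, ?_, ?_⟩
  · rw [norm_smul, norm_inv, Real.norm_of_nonneg hρ.le]
    exact mul_le_of_le_one_right (inv_nonneg.2 hρ.le) hy1.le
  · rwa [map_smul, norm_smul, norm_inv, Real.norm_of_nonneg hρ.le, ← div_eq_inv_mul, one_lt_div hρ]

namespace WeakDual

variable {P : Type*} [NormedAddCommGroup P] [NormedSpace ℝ P]

section Sampling

variable {ι : Type*} {x : ι → P}

theorem tendsto_apply_cofinite_zero (hx : Tendsto x cofinite (𝓝 0)) (f : WeakDual ℝ P) :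
    Tendsto (fun i => f (x i)) cofinite (𝓝 0) :=
  ((toStrongDual f).continuous.tendsto' 0 0 (map_zero _)).comp hx

noncomputable def sampling (hx : Tendsto x cofinite (𝓝 0)) :
    WeakDual ℝ P →ₗ[ℝ] lp (fun _ : ι => ℝ) ∞ where
  toFun f := ⟨fun i => f (x i),
    memℓp_infty_iff.2 (tendsto_apply_cofinite_zero hx f).norm.bddAbove_range_of_cofinite⟩
  map_add' _ _ := rfl
  map_smul' _ _ := rfl

@[simp]
theorem sampling_apply (hx : Tendsto x cofinite (𝓝 0)) (f : WeakDual ℝ P) (i : ι) :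
    sampling hx f i = f (x i) :=
  rfl

theorem exists_apply_eq_sampling [CompleteSpace P] [DecidableEq ι]
    (hx : Tendsto x cofinite (𝓝 0)) (g : lp (fun _ : ι => ℝ) ∞ →L[ℝ] ℝ) :
    ∃ x₀ : P, ∀ f : WeakDual ℝ P, f x₀ = g (sampling hx f) := by
  obtain ⟨M, hM⟩ := hx.norm.bddAbove_range_of_cofinite
  have hsum : Summable fun i => g (lp.single ∞ i 1) • x i :=
    .of_norm_bounded ((lp.summable_apply_single g).abs.mul_right M) fun i => by
      rw [norm_smul, Real.norm_eq_abs]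
      exact mul_le_mul_of_nonneg_left (hM ⟨i, rfl⟩) (abs_nonneg _)
  refine ⟨∑' i, g (lp.single ∞ i 1) • x i, fun f => ?_⟩
  have hf : HasSum (fun i => f (x i) * g (lp.single ∞ i 1))
      (f (∑' i, g (lp.single ∞ i 1) • x i)) := by
    simpa [mul_comm] using hsum.hasSum.mapL (toStrongDual f)
  have hf0 : Tendsto (fun i => ‖f (x i)‖) cofinite (𝓝 0) := by
    simpa using (tendsto_apply_cofinite_zero hx f).norm
  have hg := (lp.hasSum_single_of_tendsto_cofinite (sampling hx f) hf0).mapL g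
  simp only [sampling_apply, lp.single_eq_smul_single_one ∞ _ (f (x _)), map_smul,
    smul_eq_mul] at hg
  exact hf.unique hg

end Sampling

theorem exists_pos_le_apply_of_disjoint_polar [CompleteSpace P] {S : Set P}
    (hS : Tendsto ((↑) : S → P) cofinite (𝓝 0)) {D : Set (WeakDual ℝ P)} (hD : Convex ℝ D)
    (hDS : Disjoint D (polar ℝ S)) : ∃ x₀ : P, ∃ u : ℝ, 0 < u ∧ ∀ f ∈ D, u ≤ f x₀ := by
  classical
  have hdisj : Disjoint (ball 0 1) (sampling hS '' D) := by
    refine Set.disjoint_left.2 ?_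
    rintro _ h1 ⟨f, hf, rfl⟩
    obtain ⟨i, hi⟩ : ∃ i : S, 1 < ‖f i‖ := by
      by_contra! h
      exact Set.disjoint_left.1 hDS hf fun x hx => h ⟨x, hx⟩
    exact (mem_ball_zero_iff.1 h1).not_ge
      (hi.le.trans (lp.norm_apply_le_norm ENNReal.top_ne_zero (sampling hS f) i))
  obtain ⟨g, u, hball, hgD⟩ := geometric_hahn_banach_open (convex_ball 0 1) isOpen_ball
    (hD.linear_image (sampling hS)) hdisj
  obtain ⟨x₀, hx₀⟩ := exists_apply_eq_sampling hS g
  refine ⟨x₀, u, by simpa using hball 0 (mem_ball_self one_pos), fun f hf => ?_⟩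
  rw [hx₀]
  exact hgD _ ⟨f, hf, rfl⟩

theorem exists_finset_disjoint_polar_of_isCompact {K : Set (WeakDual ℝ P)} (hK : IsCompact K)
    {ρ : ℝ} (hρ : 0 < ρ) (hKρ : ∀ f ∈ K, ρ < ‖toStrongDual f‖) :
    ∃ F : Finset P, (∀ x ∈ F, ‖x‖ ≤ ρ⁻¹) ∧ Disjoint K (polar ℝ F) := by
  obtain ⟨T, hTρ, hT, hKT⟩ := hK.elim_finite_subcover_image (b := closedBall (0 : P) ρ⁻¹)
    (c := fun x => {f : WeakDual ℝ P | 1 < ‖f x‖})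
    (fun x _ => isOpen_lt continuous_const (eval_continuous x).norm) fun f hf => by
      obtain ⟨x, hx, h1⟩ := StrongDual.exists_norm_le_inv_one_lt_norm_apply hρ (hKρ f hf)
      exact mem_biUnion (mem_closedBall_zero_iff.2 hx) h1
  refine ⟨hT.toFinset, fun x hx => mem_closedBall_zero_iff.1 (hTρ (hT.mem_toFinset.1 hx)), ?_⟩
  refine Set.disjoint_left.2 fun f hf hpol => ?_
  obtain ⟨x, hx, h1⟩ := mem_iUnion₂.1 (hKT hf)
  exact (hpol x (hT.mem_toFinset.2 hx)).not_gt h1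

theorem exists_finset_forall_lt_norm_inter_polar_union {D : Set (WeakDual ℝ P)} {R ρ : ℝ}
    (hDR : IsClosed (D ∩ toStrongDual ⁻¹' closedBall 0 R)) (hρ : 0 < ρ) {G : Set P}
    (hG : ∀ f ∈ D ∩ polar ℝ G, ρ < ‖toStrongDual f‖) :
    ∃ F : Finset P, (∀ x ∈ F, ‖x‖ ≤ ρ⁻¹) ∧ ∀ f ∈ D ∩ polar ℝ (G ∪ F), R < ‖toStrongDual f‖ := by
  have hK : IsCompact (D ∩ toStrongDual ⁻¹' closedBall 0 R ∩ polar ℝ G) :=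
    (isCompact_closedBall 0 R).of_isClosed_subset (hDR.inter (isClosed_polar _ _))
      fun f hf => hf.1.2
  obtain ⟨F, hF, hKF⟩ := exists_finset_disjoint_polar_of_isCompact hK hρ
    fun f hf => hG f ⟨hf.1.1, hf.2⟩
  refine ⟨F, hF, fun f ⟨hfD, hfGF⟩ => ?_⟩
  by_contra! hfR
  refine Set.disjoint_left.1 hKF ⟨⟨hfD, mem_closedBall_zero_iff.2 hfR⟩, ?_⟩ ?_
  · exact fun x hx => hfGF x (Or.inl hx)
  · exact fun x hx => hfGF x (Or.inr hx)

theorem exists_tendsto_cofinite_zero_disjoint_polar {D : Set (WeakDual ℝ P)}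
    (hD : ∀ r, 0 < r → IsClosed (D ∩ toStrongDual ⁻¹' closedBall 0 r)) {r₀ : ℝ} (hr₀ : 0 < r₀)
    (hDr₀ : ∀ f ∈ D, r₀ < ‖toStrongDual f‖) :
    ∃ S : Set P, Tendsto ((↑) : S → P) cofinite (𝓝 0) ∧ Disjoint D (polar ℝ S) := by
  let Avoids (n : ℕ) (G : Set P) : Prop := ∀ f ∈ D ∩ polar ℝ G, (n + 1) * r₀ < ‖toStrongDual f‖
  -- the implication inside the existential lets `choose` pick `F n G` for every `G`
  have step (n : ℕ) (G : Set P) : ∃ F : Finset P,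
      Avoids n G → (∀ x ∈ F, ‖x‖ ≤ ((n + 1) * r₀)⁻¹) ∧ Avoids (n + 1) (G ∪ F) := by
    by_cases hG : Avoids n G
    · obtain ⟨F, hF, hGF⟩ := exists_finset_forall_lt_norm_inter_polar_union
        (hD ((n + 1 + 1) * r₀) (by positivity)) (by positivity) hG
      exact ⟨F, fun _ => ⟨hF, by simpa [Avoids] using hGF⟩⟩
    · exact ⟨∅, fun h => (hG h).elim⟩
  choose F hF using step
  let G (n : ℕ) : Set P := Nat.rec ∅ (fun k Gk => Gk ∪ F k Gk) n
  have hG (n : ℕ) : Avoids n (G n) :=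
    Nat.rec (fun f hf => by simpa using hDr₀ f hf.1) (fun k ih => (hF k _ ih).2) n
  have hGS (n : ℕ) : G n ⊆ ⋃ k, (F k (G k) : Set P) :=
    Nat.rec (empty_subset _) (fun k ih => union_subset ih (subset_iUnion_of_subset k subset_rfl)) n
  refine ⟨⋃ n, (F n (G n) : Set P), tendsto_coe_iUnion_cofinite_zero ?_ fun n => (hF n _ (hG n)).1,
    Set.disjoint_left.2 fun f hfD hfS => ?_⟩
  · exact tendsto_inv_atTop_zero.comp
      ((tendsto_natCast_atTop_atTop.atTop_add tendsto_const_nhds).atTop_mul_const hr₀)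
  · obtain ⟨n, hn⟩ := exists_nat_ge (‖toStrongDual f‖ / r₀)
    have := hG n f ⟨hfD, fun x hx => hfS x (hGS n hx)⟩
    rw [div_le_iff₀ hr₀] at hn
    linarith

theorem exists_pos_forall_lt_norm {D : Set (WeakDual ℝ P)}
    (hD : IsClosed (D ∩ toStrongDual ⁻¹' closedBall 0 1)) (h0 : 0 ∉ D) :
    ∃ r₀ > 0, ∀ f ∈ D, r₀ < ‖toStrongDual f‖ := by
  obtain ⟨ε, hε, hball⟩ := Metric.isOpen_iff.1
    (hD.isOpen_compl.preimage NormedSpace.Dual.toWeakDual_continuous) 0 fun h => h0 h.1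
  refine ⟨min (ε / 2) 1, by positivity, fun f hf => ?_⟩
  by_contra! hfr
  obtain ⟨hfε, hf1⟩ := le_min_iff.1 hfr
  exact hball (mem_ball_zero_iff.2 (show ‖toStrongDual f‖ < ε by linarith))
    ⟨hf, mem_closedBall_zero_iff.2 hf1⟩

theorem exists_pos_le_apply_of_zero_notMem [CompleteSpace P] {D : Set (WeakDual ℝ P)}
    (hD : Convex ℝ D) (hDr : ∀ r, 0 < r → IsClosed (D ∩ toStrongDual ⁻¹' closedBall 0 r))
    (h0 : 0 ∉ D) : ∃ x₀ : P, ∃ u : ℝ, 0 < u ∧ ∀ f ∈ D, u ≤ f x₀ := by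
  obtain ⟨r₀, hr₀, hDr₀⟩ := exists_pos_forall_lt_norm (hDr 1 one_pos) h0
  obtain ⟨S, hS, hDS⟩ := exists_tendsto_cofinite_zero_disjoint_polar hDr hr₀ hDr₀
  exact exists_pos_le_apply_of_disjoint_polar hS hD hDS

theorem exists_lt_le_apply_of_notMem [CompleteSpace P] {C : Set (WeakDual ℝ P)}
    (hC : Convex ℝ C) (hCr : ∀ r, 0 < r → IsClosed (C ∩ toStrongDual ⁻¹' closedBall 0 r))
    {φ : WeakDual ℝ P} (hφ : φ ∉ C) : ∃ x₀ : P, ∃ u : ℝ, φ x₀ < u ∧ ∀ f ∈ C, u ≤ f x₀ := by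
  have hDr (r : ℝ) (hr : 0 < r) :
      IsClosed ((φ + ·) ⁻¹' C ∩ toStrongDual ⁻¹' closedBall 0 r) := by
    have : (φ + ·) ⁻¹' C ∩ toStrongDual ⁻¹' closedBall 0 r =
        (φ + ·) ⁻¹' (C ∩ toStrongDual ⁻¹' closedBall 0 (r + ‖toStrongDual φ‖)) ∩
          toStrongDual ⁻¹' closedBall 0 r := by
      ext f
      simp only [mem_inter_iff, mem_preimage, mem_closedBall_zero_iff, map_add]
      exact ⟨fun ⟨hfC, hf⟩ => ⟨⟨hfC, (norm_add_le _ _).trans (by linarith)⟩, hf⟩,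
        fun ⟨⟨hfC, _⟩, hf⟩ => ⟨hfC, hf⟩⟩
    rw [this]
    exact ((hCr _ (by positivity)).preimage (continuous_const_add φ)).inter
      (isClosed_closedBall 0 r)
  obtain ⟨x₀, u, hu, hD⟩ :=
    exists_pos_le_apply_of_zero_notMem (hC.translate_preimage_right φ) hDr (by simpa using hφ)
  refine ⟨x₀, φ x₀ + u, by linarith, fun f hf => ?_⟩
  have : u ≤ f x₀ - φ x₀ := hD (f - φ) (by simpa using hf)
  linarith

theorem isClosed_of_convex_of_forall_isClosed_inter_closedBall [CompleteSpace P]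
    {C : Set (WeakDual ℝ P)} (hC : Convex ℝ C)
    (hCr : ∀ r, 0 < r → IsClosed (C ∩ toStrongDual ⁻¹' closedBall 0 r)) : IsClosed C := by
  refine isOpen_compl_iff.1 (isOpen_iff_forall_mem_open.2 fun φ hφ => ?_)
  obtain ⟨x₀, u, hφu, hCu⟩ := exists_lt_le_apply_of_notMem hC hCr hφ
  exact ⟨{f | f x₀ < u}, fun f hf hfC => (hCu f hfC).not_gt hf,
    isOpen_lt (eval_continuous x₀) continuous_const, hφu⟩

end WeakDual

/-- **Krein–Smulian**: a convex set in the dual of a Banach space is weak*-closed iff its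
intersection with every closed ball is weak*-closed. -/
theorem kreinSmulian {P : Type*} [NormedAddCommGroup P] [NormedSpace ℝ P] [CompleteSpace P]
    (C : Set (StrongDual ℝ P)) (hC : Convex ℝ C) :
    IsClosed[weakStarTop P] C ↔
      ∀ r : ℝ, 0 < r → IsClosed[weakStarTop P] (C ∩ Metric.closedBall 0 r) :=
  ⟨fun h r _ => IsClosed.inter (X := WeakDual ℝ P) h (WeakDual.isClosed_closedBall 0 r),
    WeakDual.isClosed_of_convex_of_forall_isClosed_inter_closedBall hC⟩
end

section
/- Let P be a real Banach space. Every linear functional on P* that is continuous on norm-bounded subsets of P* for the Mackey topology m(P*, P) is m(P*, P)-continuous on all of P*, i.e., is given by evaluation at an element of P. -/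
open Topology

/-- The weak topology on a normed space `Y`, i.e. `w(Y, Y*)`. -/
noncomputable def weakTop (Y : Type*) [NormedAddCommGroup Y] [NormedSpace ℝ Y] :
    TopologicalSpace Y :=
  inferInstanceAs (TopologicalSpace (WeakSpace ℝ Y))

/-- The Mackey topology `m(P*, P)` on the norm dual of `P`: the topology of uniform convergence
on weakly compact, convex, balanced (circled) subsets of `P`. -/
noncomputable def mackeyTop (P : Type*) [NormedAddCommGroup P] [NormedSpace ℝ P] :
    TopologicalSpace (StrongDual ℝ P) :=
  TopologicalSpace.induced
    (fun f => UniformOnFun.ofFun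
      {K : Set P | @IsCompact P (weakTop P) K ∧ Convex ℝ K ∧ Balanced ℝ K} (f : P → ℝ))
    inferInstance

/-!
Grothendieck's completeness argument. Weakly compact sets are norm bounded, so the Mackey topology
is coarser than the norm topology and `φ` is a norm-continuous functional `Φ ∈ P**`. Continuity of
`φ` on the ball of radius `δ⁻¹` gives a weakly compact absolutely convex `K ⊆ P` with `|Φ f| < 1`
whenever `|f| < 1` on `K` and `‖f‖ ≤ δ⁻¹`. Separating `Φ` from the weak*-compact convex set
`K + δ • B_{P**}` by a weak*-continuous functional, i.e. by an element of `P*`, shows that `Φ` lies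
in it, so `Φ` is within `δ` of `P`. As `P` is complete it is closed in `P**`, hence `Φ ∈ P`; and
evaluation at a point `x` is Mackey continuous because the segment `[-x, x]` is weakly compact and
absolutely convex.
-/

open Set Metric NormedSpace Pointwise

theorem Balanced.linear_image {𝕜 E F : Type*} [SeminormedRing 𝕜] [AddCommMonoid E]
    [AddCommMonoid F] [Module 𝕜 E] [Module 𝕜 F] {s : Set E} (hs : Balanced 𝕜 s)
    (f : E →ₗ[𝕜] F) : Balanced 𝕜 (f '' s) := fun a ha => by
  rw [← image_smul_set]
  exact image_mono (hs a ha)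

instance WeakDual.instLocallyConvexSpace {E : Type*} [NormedAddCommGroup E] [NormedSpace ℝ E] :
    LocallyConvexSpace ℝ (WeakDual ℝ E) :=
  WeakBilin.locallyConvexSpace

theorem WeakDual.exists_mem_norm_sub_le_of_forall_le_one {E : Type*} [NormedAddCommGroup E]
    [NormedSpace ℝ E] {A : Set (WeakDual ℝ E)} (hA : IsCompact A) (hAc : Convex ℝ A)
    (hA0 : 0 ∈ A) {δ : ℝ} (hδ : 0 < δ) (Φ : WeakDual ℝ E)
    (hΦ : ∀ y : E, (∀ a ∈ A, a y < 1) → δ * ‖y‖ < 1 → Φ y ≤ 1) :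
    ∃ a ∈ A, ‖WeakDual.toStrongDual (Φ - a)‖ ≤ δ := by
  set B := WeakDual.toStrongDual ⁻¹' closedBall (0 : StrongDual ℝ E) δ
  have hBc : Convex ℝ B :=
    (convex_closedBall _ δ).linear_preimage (WeakDual.toStrongDual (𝕜 := ℝ) (E := E)).toLinearMap
  suffices Φ ∈ A + B by
    obtain ⟨a, ha, b, hb, rfl⟩ := this
    exact ⟨a, ha, by simpa [B] using hb⟩
  by_contra hΦ_not_mem
  obtain ⟨F, u, hF, huΦ⟩ := geometric_hahn_banach_closed_point (hAc.add hBc)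
    (hA.add (WeakDual.isCompact_closedBall 0 δ)).isClosed hΦ_not_mem
  -- a weak*-continuous functional on `WeakDual ℝ E` is evaluation at some `y : E`
  obtain ⟨y, rfl⟩ := (topDualPairing ℝ E).dualEmbedding_surjective F
  replace hF : ∀ ψ ∈ A + B, ψ y < u := hF
  replace huΦ : u < Φ y := huΦ
  have hB0 : (0 : WeakDual ℝ E) ∈ B := by simp [B, hδ.le]
  have hu : 0 < u := hF 0 (by simpa using add_mem_add hA0 hB0)
  have hA_lt : ∀ a ∈ A, a (u⁻¹ • y) < 1 := fun a ha => by
    have := hF a (by simpa using add_mem_add ha hB0)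
    rwa [map_smul, smul_eq_mul, inv_mul_lt_one₀ hu]
  have hnorm : δ * ‖u⁻¹ • y‖ < 1 := by
    obtain ⟨ψ, hψ, hψy⟩ := exists_dual_vector'' ℝ (u⁻¹ • y)
    have hδψ : StrongDual.toWeakDual (δ • ψ) ∈ B := by
      simpa [B, norm_smul, abs_of_pos hδ] using mul_le_of_le_one_right hδ.le hψ
    have hδψ_lt : δ * ψ y < u := hF _ (by simpa using add_mem_add hA0 hδψ)
    replace hψy : ψ (u⁻¹ • y) = ‖u⁻¹ • y‖ := hψy
    rw [← hψy, map_smul, smul_eq_mul, ← mul_assoc, mul_comm δ, mul_assoc, inv_mul_lt_one₀ hu]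
    exact hδψ_lt
  have hΦ_le := hΦ _ hA_lt hnorm
  rw [map_smul, smul_eq_mul, inv_mul_le_one₀ hu] at hΦ_le
  exact hΦ_le.not_gt huΦ

theorem isClosed_range_inclusionInDoubleDual (𝕜 E : Type*) [RCLike 𝕜] [NormedAddCommGroup E]
    [NormedSpace 𝕜 E] [CompleteSpace E] : IsClosed (range (inclusionInDoubleDual 𝕜 E)) :=
  have hiso : Isometry (inclusionInDoubleDual 𝕜 E) := (inclusionInDoubleDualLi 𝕜).isometry
  hiso.isClosedEmbedding.isClosed_range

abbrev mackeySets (P : Type*) [NormedAddCommGroup P] [NormedSpace ℝ P] : Set (Set P) :=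
  {K : Set P | @IsCompact P (weakTop P) K ∧ Convex ℝ K ∧ Balanced ℝ K}

noncomputable def inclusionInWeakDoubleDual (P : Type*) [NormedAddCommGroup P] [NormedSpace ℝ P] :
    P →ₗ[ℝ] WeakDual ℝ (StrongDual ℝ P) :=
  StrongDual.toWeakDual.toLinearMap ∘ₗ (inclusionInDoubleDual ℝ P).toLinearMap

section Mackey

variable {P : Type*} [NormedAddCommGroup P] [NormedSpace ℝ P]

theorem continuous_inclusionInWeakDoubleDual :
    Continuous fun x : WeakSpace ℝ P => inclusionInWeakDoubleDual P x :=
  WeakDual.continuous_of_continuous_eval fun f => WeakBilin.eval_continuous _ f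

theorem isBounded_of_isCompact_weakTop {K : Set P} (hK : @IsCompact P (weakTop P) K) :
    Bornology.IsBounded K := by
  have h := ((IsCompact.image (X := WeakSpace ℝ P) hK
    continuous_inclusionInWeakDoubleDual).isVonNBounded ℝ)
  rw [← WeakDual.isBounded_iff_isVonNBounded] at h
  exact ((inclusionInDoubleDualLi ℝ (E := P)).antilipschitz.isBounded_preimage h).subset
    (subset_preimage_image _ _)

theorem norm_topology_le_mackeyTop :
    (inferInstance : TopologicalSpace (StrongDual ℝ P)) ≤ mackeyTop P := by
  rw [mackeyTop, ← continuous_iff_le_induced]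
  exact (UniformOnFun.uniformContinuous_ofFun_toFun_of_subset (β := ℝ) (mackeySets P)
    {S : Set P | Bornology.IsVonNBounded ℝ S} fun K hK =>
    (NormedSpace.isVonNBounded_iff ℝ).2 (isBounded_of_isCompact_weakTop hK.1)).continuous.comp
    (UniformConvergenceCLM.isEmbedding_coeFn (RingHom.id ℝ) ℝ _).continuous

theorem mackeySets_directedOn : DirectedOn (· ⊆ ·) (mackeySets P) := by
  rintro K₁ h₁ K₂ h₂
  rcases K₁.eq_empty_or_nonempty with rfl | hK₁
  · exact ⟨K₂, h₂, empty_subset _, subset_rfl⟩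
  rcases K₂.eq_empty_or_nonempty with rfl | hK₂
  · exact ⟨K₁, h₁, subset_rfl, empty_subset _⟩
  exact ⟨K₁ + K₂, ⟨IsCompact.add (N := WeakSpace ℝ P) h₁.1 h₂.1, h₁.2.1.add h₂.2.1,
    h₁.2.2.add h₂.2.2⟩, subset_add_left _ (h₂.2.2.zero_mem hK₂),
    subset_add_right _ (h₁.2.2.zero_mem hK₁)⟩

theorem singleton_zero_mem_mackeySets : {0} ∈ mackeySets P :=
  ⟨@isCompact_singleton P (weakTop P) 0, convex_singleton 0, balanced_zero⟩

theorem smul_mem_mackeySets {K : Set P} (hK : K ∈ mackeySets P) (c : ℝ) :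
    c • K ∈ mackeySets P :=
  ⟨IsCompact.smul (β := WeakSpace ℝ P) c hK.1, hK.2.1.smul c, hK.2.2.smul c⟩

theorem exists_mackeySets_subset_of_mem_nhds {U : Set (StrongDual ℝ P)}
    (hU : U ∈ @nhds _ (mackeyTop P) 0) :
    ∃ K ∈ mackeySets P, 0 ∈ K ∧ {f : StrongDual ℝ P | ∀ x ∈ K, |f x| < 1} ⊆ U := by
  rw [mackeyTop, nhds_induced] at hU
  obtain ⟨V, hV, hVU⟩ := hU
  change V ∈ @nhds (UniformOnFun P ℝ (mackeySets P)) _ 0 at hV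
  obtain ⟨⟨K, ε⟩, ⟨hK, hε⟩, hKV⟩ := ((UniformOnFun.hasBasis_nhds_zero_of_basis (mackeySets P)
    ⟨_, singleton_zero_mem_mackeySets⟩ mackeySets_directedOn
    nhds_basis_ball).mem_iff).1 hV
  obtain ⟨K', hK', hKK', hK'0⟩ :=
    mackeySets_directedOn _ (smul_mem_mackeySets hK ε⁻¹) _ singleton_zero_mem_mackeySets
  refine ⟨K', hK', singleton_subset_iff.1 hK'0, fun f hf => hVU (hKV fun x hx => ?_)⟩
  have := hf _ (hKK' (smul_mem_smul_set hx))
  simp only [map_smul, smul_eq_mul, abs_mul, abs_inv, abs_of_pos hε] at this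
  simpa [Real.dist_eq, abs_sub_comm] using (inv_mul_lt_one₀ hε).1 this

theorem LinearMap.continuous_of_continuousOn_mackeyTop_closedBall (φ : StrongDual ℝ P →ₗ[ℝ] ℝ)
    {r : ℝ} (hr : 0 < r) (hφ : @ContinuousOn _ _ (mackeyTop P) _ φ (closedBall 0 r)) :
    Continuous φ := by
  refine continuous_of_continuousAt_zero φ ?_
  have hφ0 := hφ 0 (mem_closedBall_self hr.le)
  rw [ContinuousAt, ← nhdsWithin_eq_nhds.2 (closedBall_mem_nhds 0 hr)]
  exact hφ0.mono_left (inf_le_inf_right _ (nhds_mono norm_topology_le_mackeyTop))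

theorem continuous_mackeyTop_apply (x : P) :
    @Continuous _ _ (mackeyTop P) _ fun f : StrongDual ℝ P => f x := by
  have hK : LinearMap.toSpanSingleton ℝ P x '' closedBall 0 1 ∈ mackeySets P :=
    ⟨(isCompact_closedBall 0 1).image (Y := WeakSpace ℝ P)
      ((toWeakSpaceCLM ℝ P).continuous.comp (ContinuousLinearMap.toSpanSingleton ℝ x).continuous),
      (convex_closedBall 0 1).linear_image _, balanced_closedBall_zero.linear_image _⟩
  have hx : x ∈ LinearMap.toSpanSingleton ℝ P x '' closedBall 0 1 :=
    ⟨1, by simp, one_smul ℝ x⟩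
  exact @Continuous.comp _ _ _ (mackeyTop P) _ _ _ _
    (UniformOnFun.uniformContinuous_eval_of_mem ℝ (mackeySets P) hx hK).continuous
    continuous_induced_dom

theorem exists_norm_sub_inclusionInDoubleDual_le (Φ : StrongDual ℝ (StrongDual ℝ P)) {δ : ℝ}
    (hδ : 0 < δ) (hΦ : @ContinuousOn _ _ (mackeyTop P) _ Φ (closedBall 0 δ⁻¹)) :
    ∃ x : P, ‖Φ - inclusionInDoubleDual ℝ P x‖ ≤ δ := by
  have hΦ0 : Φ ⁻¹' ball 0 1 ∈ @nhdsWithin _ (mackeyTop P) 0 (closedBall 0 δ⁻¹) :=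
    @ContinuousWithinAt.preimage_mem_nhdsWithin _ _ (mackeyTop P) _ _ _ _ _
      (hΦ 0 (mem_closedBall_self (inv_pos.2 hδ).le)) (by simpa using ball_mem_nhds 0 one_pos)
  obtain ⟨U, hU, hUΦ⟩ := (@mem_nhdsWithin_iff_exists_mem_nhds_inter _ (mackeyTop P) _ _ _).1 hΦ0
  obtain ⟨K, hK, hK0, hKU⟩ := exists_mackeySets_subset_of_mem_nhds hU
  have hpolar (f : StrongDual ℝ P) (hfK : ∀ a ∈ inclusionInWeakDoubleDual P '' K, a f < 1)
      (hf : δ * ‖f‖ < 1) : Φ f ≤ 1 := by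
    have hfK' : ∀ x ∈ K, |f x| < 1 := fun x hx => by
      have hneg : f (-x) < 1 := hfK _ (mem_image_of_mem _ (hK.2.2.neg_mem_iff.2 hx))
      rw [map_neg] at hneg
      exact abs_lt.2 ⟨by linarith, hfK _ (mem_image_of_mem _ hx)⟩
    have hfr : f ∈ closedBall 0 δ⁻¹ := by
      rw [mem_closedBall_zero_iff, ← one_div, le_div_iff₀' hδ]
      exact hf.le
    have hΦf : |Φ f| < 1 := by simpa using hUΦ ⟨hKU hfK', hfr⟩
    exact (abs_lt.1 hΦf).2.le
  obtain ⟨_, ⟨x, -, rfl⟩, hx⟩ := WeakDual.exists_mem_norm_sub_le_of_forall_le_one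
    (IsCompact.image (X := WeakSpace ℝ P) hK.1 continuous_inclusionInWeakDoubleDual)
    (hK.2.1.linear_image _) ⟨0, hK0, map_zero _⟩ hδ (StrongDual.toWeakDual Φ) hpolar
  exact ⟨x, hx⟩

end Mackey

/-- A linear functional on the dual of a Banach space that is Mackey-continuous on every
closed ball is Mackey-continuous on the whole dual, i.e. is evaluation at a point of `P`. -/
theorem stmt3 {P : Type*} [NormedAddCommGroup P] [NormedSpace ℝ P] [CompleteSpace P]
    (φ : StrongDual ℝ P →ₗ[ℝ] ℝ)
    (h : ∀ r : ℝ, 0 < r →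
      @ContinuousOn _ _ (mackeyTop P) _ φ (Metric.closedBall 0 r)) :
    @Continuous _ _ (mackeyTop P) _ φ ∧ ∃ x : P, ∀ f : StrongDual ℝ P, φ f = f x := by
  let Φ : StrongDual ℝ (StrongDual ℝ P) :=
    ⟨φ, φ.continuous_of_continuousOn_mackeyTop_closedBall one_pos (h 1 one_pos)⟩
  obtain ⟨x, hx⟩ : Φ ∈ range (inclusionInDoubleDual ℝ P) := by
    refine (isClosed_range_inclusionInDoubleDual ℝ P).closure_subset <|
      (mem_closure_iff (α := StrongDual ℝ (StrongDual ℝ P))).2 fun ε hε => ?_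
    obtain ⟨x, hx⟩ := exists_norm_sub_inclusionInDoubleDual_le Φ (half_pos hε)
      (h _ (inv_pos.2 (half_pos hε)))
    exact ⟨_, mem_range_self x,
      (dist_eq_norm (E := StrongDual ℝ (StrongDual ℝ P)) _ _).trans_lt (by linarith)⟩
  have hφx : ⇑φ = fun f : StrongDual ℝ P => f x := funext fun f => (DFunLike.congr_fun hx f).symm
  exact ⟨hφx ▸ continuous_mackeyTop_apply x, x, congrFun hφx⟩
end

section
/- Let (T, σ) be a sigma-finite measure space. The lattice operation (f, g) ↦ f ∨ g is jointly continuous on L∞(T, σ) for the Mackey topology m(L∞, L¹) restricted to norm-bounded sets; equivalently, if norm-bounded sequences fₙ → f and gₙ → g in measure on sets of finite measure, then fₙ ∨ gₙ → f ∨ g in measure on sets of finite measure. -/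
open Topology Filter MeasureTheory ENNReal

/-!
In a normed lattice `‖a ⊔ b - c ⊔ d‖ ≤ ‖a - c‖ + ‖b - d‖`, so where `Fₙ ⊔ Gₙ` is `ε`-far from
`f ⊔ g`, either `Fₙ` is `ε/2`-far from `f` or `Gₙ` is `ε/2`-far from `g`; the measures of both
sets tend to zero.
-/

section NormedLattice

variable {E : Type*} [NormedAddCommGroup E] [Lattice E] [HasSolidNorm E] [IsOrderedAddMonoid E]

theorem edist_sup_sup_le_add_edist (a b c d : E) :
    edist (a ⊔ b) (c ⊔ d) ≤ edist a c + edist b d := by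
  simp only [edist_dist, dist_eq_norm]
  rw [← ENNReal.ofReal_add (norm_nonneg _) (norm_nonneg _)]
  exact ENNReal.ofReal_le_ofReal (norm_sup_sub_sup_le_add_norm a b c d)

theorem MeasureTheory.TendstoInMeasure.sup {α ι : Type*} [MeasurableSpace α] {μ : Measure α}
    {l : Filter ι} {f g : ι → α → E} {f' g' : α → E}
    (hf : TendstoInMeasure μ f l f') (hg : TendstoInMeasure μ g l g') :
    TendstoInMeasure μ (fun i => f i ⊔ g i) l (f' ⊔ g') := by
  intro ε hε
  have hsplit : ∀ i, μ {x | ε ≤ edist ((f i ⊔ g i) x) ((f' ⊔ g') x)} ≤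
      μ {x | ε / 2 ≤ edist (f i x) (f' x)} + μ {x | ε / 2 ≤ edist (g i x) (g' x)} := by
    intro i
    refine (measure_mono fun x hx => ?_).trans (measure_union_le _ _)
    by_contra! hfar
    simp only [Set.mem_union, Set.mem_ofPred_eq, not_or, not_le] at hfar
    have hclose : edist ((f i ⊔ g i) x) ((f' ⊔ g') x) < ε :=
      calc edist ((f i ⊔ g i) x) ((f' ⊔ g') x)
          ≤ edist (f i x) (f' x) + edist (g i x) (g' x) := edist_sup_sup_le_add_edist _ _ _ _
        _ < ε / 2 + ε / 2 := ENNReal.add_lt_add hfar.1 hfar.2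
        _ = ε := ENNReal.add_halves ε
    exact hclose.not_ge hx
  have hsum := (hf _ (ENNReal.half_pos hε.ne')).add (hg _ (ENNReal.half_pos hε.ne'))
  rw [add_zero] at hsum
  exact tendsto_of_tendsto_of_tendsto_of_le_of_le tendsto_const_nhds hsum (fun _ => zero_le) hsplit

end NormedLattice

theorem stmt10_general {T : Type*} [MeasurableSpace T] (μ : MeasureTheory.Measure T)
    (F G : ℕ → Lp ℝ ∞ μ) (f g : Lp ℝ ∞ μ)
    (hFf : ∀ A : Set T, μ A < ⊤ →
      TendstoInMeasure (μ.restrict A) (fun n => (F n : T → ℝ)) atTop f)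
    (hGg : ∀ A : Set T, μ A < ⊤ →
      TendstoInMeasure (μ.restrict A) (fun n => (G n : T → ℝ)) atTop g) :
    ∀ A : Set T, μ A < ⊤ →
      TendstoInMeasure (μ.restrict A) (fun n => ((F n ⊔ G n : Lp ℝ ∞ μ) : T → ℝ)) atTop
        (f ⊔ g : Lp ℝ ∞ μ) := by
  intro A hA
  exact ((hFf A hA).sup (hGg A hA)).congr
    (fun n => ae_restrict_of_ae (Lp.coeFn_sup (F n) (G n)).symm)
    (ae_restrict_of_ae (Lp.coeFn_sup f g).symm)

/-- Joint continuity of the lattice operation `⊔` on norm-bounded subsets of `L∞` for the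
topology of convergence in measure on sets of finite measure (which agrees there with the
Mackey topology `m(L∞, L¹)`): if norm-bounded sequences `Fₙ → f` and `Gₙ → g` in measure on
every set of finite measure, then `Fₙ ⊔ Gₙ → f ⊔ g` in measure on every set of finite
measure. -/
theorem stmt10 {T : Type*} [MeasurableSpace T] (μ : MeasureTheory.Measure T) [SigmaFinite μ]
    (r : ℝ) (F G : ℕ → Lp ℝ ∞ μ) (f g : Lp ℝ ∞ μ)
    (hF : ∀ n, ‖F n‖ ≤ r) (hG : ∀ n, ‖G n‖ ≤ r)
    (hFf : ∀ A : Set T, μ A < ⊤ →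
      TendstoInMeasure (μ.restrict A) (fun n => (F n : T → ℝ)) atTop f)
    (hGg : ∀ A : Set T, μ A < ⊤ →
      TendstoInMeasure (μ.restrict A) (fun n => (G n : T → ℝ)) atTop g) :
    ∀ A : Set T, μ A < ⊤ →
      TendstoInMeasure (μ.restrict A) (fun n => ((F n ⊔ G n : Lp ℝ ∞ μ) : T → ℝ)) atTop
        (f ⊔ g : Lp ℝ ∞ μ) :=
  stmt10_general μ F G f g hFf hGg
end

section
/- Let Y be an infinite-dimensional real Banach space with the Schur property. Then a subset A of Y is closed in the compact weak topology kw(Y, Y*) if and only if A is norm-closed; i.e., kw(Y, Y*) equals the norm topology. -/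
open Topology Filter

/-- The compact weak topology `kw(Y, Y*)`: the finest topology agreeing with the weak topology
on every weakly compact set, realized as the final topology with respect to the inclusions of
all weakly compact sets carrying the weak subspace topology. -/
noncomputable def kwTop (Y : Type*) [NormedAddCommGroup Y] [NormedSpace ℝ Y] :
    TopologicalSpace Y :=
  ⨆ K : {K : Set Y // @IsCompact Y (weakTop Y) K},
    TopologicalSpace.coinduced (Subtype.val : K.1 → Y)
      (TopologicalSpace.induced (Subtype.val : K.1 → Y) (weakTop Y))

/-! On a norm-compact set the weak topology coincides with the norm topology, because the
identity from a compact space onto a Hausdorff one is a homeomorphism. Under the Schur property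
weakly compact sets are norm compact: a sequence in a weakly compact set lies in a separable closed
subspace, on which countably many functionals separate points, so the weak topology is metrizable
there and the sequence has a weakly, hence norm, convergent subsequence. So `kw` is the topology
coherent with the norm-compact sets, which for the metrizable norm topology is the norm topology. -/

open TopologicalSpace

section CompactlyGenerated

variable {X : Type*} {t w : TopologicalSpace X}

theorem induced_subtypeVal_eq_of_le_of_isCompact (htw : t ≤ w) [@T2Space X w] {K : Set X}
    (hK : @IsCompact X t K) :
    induced (Subtype.val : K → X) t = induced Subtype.val w := by
  have hcpt : @CompactSpace K (induced Subtype.val t) :=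
    (@isCompact_iff_compactSpace X t K).mp hK
  have hT2 : @T2Space K (induced Subtype.val w) := @instT2SpaceSubtype X w _ _
  have hid : Continuous[induced Subtype.val t, induced Subtype.val w] (id : K → K) :=
    continuous_id_iff_le.2 (induced_mono htw)
  obtain ⟨⟨⟨heq⟩, -⟩, -⟩ := @Continuous.isClosedEmbedding K K (induced Subtype.val t)
    (induced Subtype.val w) hcpt hT2 id hid Function.injective_id
  rwa [induced_id] at heq

theorem iSup_coinduced_induced_isCompact_eq (htw : t ≤ w) [@T2Space X w]
    [@CompactlyCoherentSpace X t] (hcpt : ∀ K, @IsCompact X w K → @IsCompact X t K) :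
    ⨆ K : {K : Set X // @IsCompact X w K},
      coinduced (Subtype.val : K.1 → X) (induced Subtype.val w) = t := by
  refine le_antisymm (iSup_le fun K => ?_) fun U hU => ?_
  · rw [coinduced_le_iff_le_induced,
      ← induced_subtypeVal_eq_of_le_of_isCompact htw (hcpt K K.2)]
  · rw [isOpen_iSup_iff] at hU
    refine (@CompactlyCoherentSpace.isOpen_iff X t _ U).2 fun K hK => ?_
    have hKw : @IsCompact X w K := by
      simpa using @IsCompact.image X X t w K id hK (continuous_id_iff_le.2 htw)
    exact induced_mono htw _ (hU ⟨K, hKw⟩)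

end CompactlyGenerated

section WeakTopology

variable {𝕜 E : Type*} [RCLike 𝕜] [NormedAddCommGroup E] [NormedSpace 𝕜 E]

theorem exists_dual_seq_eq_zero_imp_of_isSeparable {s : Set E} (hs : IsSeparable s) :
    ∃ f : ℕ → StrongDual 𝕜 E, ∀ x ∈ s, (∀ n, f n x = 0) → x = 0 := by
  obtain ⟨c, hc, hsc⟩ := hs
  obtain ⟨g, hcg⟩ := Set.countable_iff_exists_subset_range.mp hc
  choose f hf_norm hf_apply using fun n => exists_dual_vector'' 𝕜 (g n)
  refine ⟨f, fun x hx hfx => norm_le_zero_iff.mp ?_⟩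
  have hclose : ∀ n, ‖x‖ ≤ 2 * dist x (g n) := fun n => by
    have : ‖g n‖ ≤ ‖x - g n‖ := calc
      ‖g n‖ = ‖f n (g n - x)‖ := by simp [hfx n, hf_apply n]
      _ ≤ ‖g n - x‖ := by simpa using (f n).le_of_opNorm_le (hf_norm n) (g n - x)
      _ = ‖x - g n‖ := norm_sub_rev _ _
    rw [dist_eq_norm]
    linarith [norm_le_insert' x (g n)]
  by_contra! hpos
  obtain ⟨_, ⟨n, rfl⟩, hn⟩ := Metric.mem_closure_iff.mp (closure_mono hcg (hsc hx)) (‖x‖ / 2)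
    (half_pos hpos)
  linarith [hclose n]

theorem WeakSpace.isSeqCompact_of_isCompact_of_isSeparable {S : Set (WeakSpace 𝕜 E)}
    (hS : IsCompact S) (hsep : IsSeparable (toWeakSpace 𝕜 E ⁻¹' S)) : IsSeqCompact S := by
  obtain ⟨f, hf⟩ := exists_dual_seq_eq_zero_imp_of_isSeparable (𝕜 := 𝕜) (hsep.span (R := 𝕜))
  let e : S → ℕ → 𝕜 := fun y n => f n ((toWeakSpace 𝕜 E).symm y)
  have he : Continuous e := continuous_pi fun n =>
    (WeakBilin.eval_continuous (topDualPairing 𝕜 E).flip (f n)).comp continuous_subtype_val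
  have he_inj : Function.Injective e := by
    intro a b hab
    have hsub : (toWeakSpace 𝕜 E).symm a - (toWeakSpace 𝕜 E).symm b = 0 :=
      hf _ (Submodule.sub_mem _ (Submodule.subset_span a.2) (Submodule.subset_span b.2))
        fun n => by simpa [sub_eq_zero, e] using congrFun hab n
    exact Subtype.ext (by simpa [sub_eq_zero] using hsub)
  have : CompactSpace S := isCompact_iff_compactSpace.mp hS
  have : MetrizableSpace S := (he.isClosedEmbedding he_inj).isEmbedding.metrizableSpace
  exact isSeqCompact_iff_seqCompactSpace.mpr inferInstance

end WeakTopology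

section Schur

variable {E : Type*} [NormedAddCommGroup E] [NormedSpace ℝ E]

theorem isClosed_toWeakSpace_image_of_convex {s : Set E} (hconv : Convex ℝ s) (hs : IsClosed s) :
    IsClosed (toWeakSpace ℝ E '' s) := by
  simpa only [hs.closure_eq, closure_eq_iff_isClosed] using (hconv.toWeakSpace_closure ℝ).symm

theorem isCompact_of_isCompact_weakTop
    (hschur : ∀ (x : ℕ → E) (y : E),
      Tendsto x atTop (@nhds _ (weakTop E) y) → Tendsto x atTop (𝓝 y))
    {K : Set E} (hK : @IsCompact E (weakTop E) K) : IsCompact K := by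
  refine IsSeqCompact.isCompact fun x hx => ?_
  let Z : Submodule ℝ E := (Submodule.span ℝ (Set.range x)).topologicalClosure
  have hxZ : ∀ n, x n ∈ Z := fun n =>
    Submodule.le_topologicalClosure _ (Submodule.subset_span (Set.mem_range_self n))
  have hZ_sep : IsSeparable (Z : Set E) := by
    simpa [Z] using ((Set.countable_range x).isSeparable.span (R := ℝ)).closure
  let S : Set (WeakSpace ℝ E) := (toWeakSpace ℝ E).symm ⁻¹' K ∩ toWeakSpace ℝ E '' Z
  have hS : IsCompact S :=
    IsCompact.inter_right hK (isClosed_toWeakSpace_image_of_convex Z.convex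
      (Submodule.isClosed_topologicalClosure _))
  obtain ⟨a, haS, φ, hφ, hlim⟩ := WeakSpace.isSeqCompact_of_isCompact_of_isSeparable hS
    (hZ_sep.mono fun y hy => by simpa using hy.2) (x := fun n => toWeakSpace ℝ E (x n))
    fun n => ⟨hx n, x n, hxZ n, rfl⟩
  exact ⟨(toWeakSpace ℝ E).symm a, haS.1, φ, hφ, hschur _ _ hlim⟩

end Schur

theorem stmt13_general {Y : Type*} [NormedAddCommGroup Y] [NormedSpace ℝ Y]
    (hschur : ∀ (x : ℕ → Y) (y : Y),
      Tendsto x atTop (@nhds _ (weakTop Y) y) → Tendsto x atTop (nhds y)) :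
    (∀ A : Set Y, @IsClosed _ (kwTop Y) A ↔ IsClosed A) ∧
      kwTop Y = (inferInstance : TopologicalSpace Y) := by
  have : @T2Space Y (weakTop Y) := inferInstanceAs (T2Space (WeakSpace ℝ Y))
  have hkw : kwTop Y = (inferInstance : TopologicalSpace Y) :=
    iSup_coinduced_induced_isCompact_eq (continuous_id_iff_le.1 (toWeakSpaceCLM ℝ Y).continuous)
      fun _ hK => isCompact_of_isCompact_weakTop hschur hK
  exact ⟨fun A => by rw [hkw], hkw⟩

/-- If `Y` is an infinite-dimensional Banach space with the Schur property, then a set is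
`kw`-closed iff it is norm-closed; i.e. the compact weak topology is the norm topology. -/
theorem stmt13 {Y : Type*} [NormedAddCommGroup Y] [NormedSpace ℝ Y] [CompleteSpace Y]
    (hinf : ¬ FiniteDimensional ℝ Y)
    (hschur : ∀ (x : ℕ → Y) (y : Y),
      Tendsto x atTop (@nhds _ (weakTop Y) y) → Tendsto x atTop (nhds y)) :
    (∀ A : Set Y, @IsClosed _ (kwTop Y) A ↔ IsClosed A) ∧
      kwTop Y = (inferInstance : TopologicalSpace Y) :=
  stmt13_general hschur
end

section
/- The space l¹ of absolutely summable real sequences has the Schur property: every weakly convergent sequence in l¹ converges in norm. -/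
/-! Gliding hump. Coordinate evaluations are continuous functionals, so a weakly null sequence
`z j` in `ℓ¹` tends to `0` coordinatewise. If nevertheless `ε ≤ ‖z j‖` infinitely often, one can
pick `j₀ < j₁ < ⋯` and consecutive blocks `[m i, m (i + 1))` of coordinates such that `z (j i)`
carries all but `ε / 4` of its mass on the `i`-th block. The bounded sequence that equals the sign
of `z (j i)` on the `i`-th block is a functional `φ` on `ℓ¹` with `ε / 2 ≤ φ (z (j i))` for all `i`,
contradicting `φ (z j) → 0`. -/

open Topology Filter

open scoped lp ENNReal

namespace lp

variable {ι E : Type*} [NormedAddCommGroup E]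

lemma summable_norm_of_one (f : ℓ¹(ι, E)) : Summable fun i => ‖f i‖ := by
  simpa using (lp.memℓp f).summable (p := 1) (by norm_num)

lemma norm_eq_tsum_norm_of_one (f : ℓ¹(ι, E)) : ‖f‖ = ∑' i, ‖f i‖ := by
  simpa using lp.norm_eq_tsum_rpow (p := 1) (by norm_num) f

lemma norm_mul_le_of_infty (a : lp (fun _ : ι ↦ ℝ) ∞) (f : ι → ℝ) (i : ι) :
    ‖a i * f i‖ ≤ ‖a‖ * ‖f i‖ := by
  rw [norm_mul]
  exact mul_le_mul_of_nonneg_right (norm_apply_le_norm ENNReal.top_ne_zero a i) (norm_nonneg _)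

lemma summable_mul_of_infty_of_one (a : lp (fun _ : ι ↦ ℝ) ∞) (f : ℓ¹(ι, ℝ)) :
    Summable fun i => a i * f i :=
  ((summable_norm_of_one f).mul_left ‖a‖).of_norm_bounded (norm_mul_le_of_infty a f)

noncomputable def inftyToOneDual (a : lp (fun _ : ι ↦ ℝ) ∞) : ℓ¹(ι, ℝ) →L[ℝ] ℝ :=
  LinearMap.mkContinuous
    { toFun := fun f => ∑' i, a i * f i
      map_add' := fun f g => by
        simp only [coeFn_add, Pi.add_apply, mul_add]
        exact (summable_mul_of_infty_of_one a f).tsum_add (summable_mul_of_infty_of_one a g)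
      map_smul' := fun c f => by
        simp only [coeFn_smul, Pi.smul_apply, smul_eq_mul, mul_left_comm _ c]
        exact tsum_mul_left }
    ‖a‖ fun f => by
      rw [norm_eq_tsum_norm_of_one f, ← tsum_mul_left]
      exact (norm_tsum_le_tsum_norm (summable_mul_of_infty_of_one a f).norm).trans
        ((summable_mul_of_infty_of_one a f).norm.tsum_le_tsum (norm_mul_le_of_infty a f)
          ((summable_norm_of_one f).mul_left ‖a‖))

lemma inftyToOneDual_apply (a : lp (fun _ : ι ↦ ℝ) ∞) (f : ℓ¹(ι, ℝ)) :
    inftyToOneDual a f = ∑' i, a i * f i :=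
  rfl

lemma two_mul_sum_norm_sub_norm_le_inftyToOneDual {a : lp (fun _ : ι ↦ ℝ) ∞} (ha : ‖a‖ ≤ 1)
    (f : ℓ¹(ι, ℝ)) (s : Finset ι) (hs : ∀ i ∈ s, a i * f i = ‖f i‖) :
    2 * ∑ i ∈ s, ‖f i‖ - ‖f‖ ≤ inftyToOneDual a f := by
  have hnonneg : ∀ i, 0 ≤ ‖f i‖ + a i * f i := fun i => by
    have := (norm_mul_le_of_infty a f i).trans (mul_le_of_le_one_left (norm_nonneg _) ha)
    linarith [neg_abs_le (a i * f i), Real.norm_eq_abs (a i * f i)]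
  have hsum := (summable_norm_of_one f).add (summable_mul_of_infty_of_one a f)
  calc 2 * ∑ i ∈ s, ‖f i‖ - ‖f‖ = ∑ i ∈ s, (‖f i‖ + a i * f i) - ‖f‖ := by
        rw [Finset.mul_sum]
        congr 1
        exact Finset.sum_congr rfl fun i hi => by rw [hs i hi]; ring
    _ ≤ ∑' i, (‖f i‖ + a i * f i) - ‖f‖ :=
        sub_le_sub_right (hsum.sum_le_tsum s fun i _ => hnonneg i) _
    _ = inftyToOneDual a f := by
        rw [(summable_norm_of_one f).tsum_add (summable_mul_of_infty_of_one a f),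
          ← norm_eq_tsum_norm_of_one, inftyToOneDual_apply]
        ring

end lp

lemma StrictMono.findGreatest_le_eq {m : ℕ → ℕ} (hm : StrictMono m) {i n : ℕ}
    (hn : n ∈ Finset.Ico (m i) (m (i + 1))) : Nat.findGreatest (fun j => m j ≤ n) n = i := by
  rw [Finset.mem_Ico] at hn
  refine Nat.findGreatest_eq_iff.2 ⟨(hm.id_le i).trans hn.1, fun _ => hn.1, fun j hij _ hj => ?_⟩
  exact (hn.2.trans_le (hm.monotone hij)).not_ge hj

lemma exists_dual_two_mul_sum_Ico_sub_norm_le (w : ℕ → ℓ¹(ℕ, ℝ)) {m : ℕ → ℕ}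
    (hm : StrictMono m) : ∃ φ : ℓ¹(ℕ, ℝ) →L[ℝ] ℝ,
      ∀ i, 2 * ∑ n ∈ Finset.Ico (m i) (m (i + 1)), ‖w i n‖ - ‖w i‖ ≤ φ (w i) := by
  let block : ℕ → ℕ := fun n => Nat.findGreatest (fun j => m j ≤ n) n
  have hsign : ∀ n, ‖(SignType.sign (w (block n) n) : ℝ)‖ ≤ 1 := fun n => by
    rcases SignType.sign (w (block n) n) with _ | _ | _ <;> simp
  let a : lp (fun _ : ℕ ↦ ℝ) ∞ :=
    ⟨fun n => SignType.sign (w (block n) n), memℓp_infty ⟨1, by rintro _ ⟨n, rfl⟩; exact hsign n⟩⟩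
  refine ⟨lp.inftyToOneDual a, fun i => ?_⟩
  refine lp.two_mul_sum_norm_sub_norm_le_inftyToOneDual
    (lp.norm_le_of_forall_le zero_le_one hsign) _ _ fun n hn => ?_
  change (SignType.sign (w (block n) n) : ℝ) * w i n = ‖w i n‖
  have hblock : block n = i := hm.findGreatest_le_eq hn
  rw [hblock, sign_mul_self, Real.norm_eq_abs]

section GlidingHump

variable {z : ℕ → ℓ¹(ℕ, ℝ)} {ε δ : ℝ}

lemma exists_concentrated_on_Ico (hcoord : ∀ n, Tendsto (fun j => z j n) atTop (𝓝 0))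
    (hfreq : ∃ᶠ j in atTop, ε ≤ ‖z j‖) (hδ : 0 < δ) (j₀ m₀ : ℕ) :
    ∃ j > j₀, ∃ m > m₀, ε ≤ ‖z j‖ ∧ ‖z j‖ < ∑ n ∈ Finset.Ico m₀ m, ‖z j n‖ + δ := by
  have hhead : Tendsto (fun j => ∑ n ∈ Finset.range m₀, ‖z j n‖) atTop (𝓝 0) := by
    simpa using tendsto_finsetSum (Finset.range m₀) fun n _ => (hcoord n).norm
  obtain ⟨j, hj, hjε, hjhead⟩ := (hfreq.and_eventually
    (hhead.eventually_lt_const (half_pos hδ))).forall_exists_of_atTop (j₀ + 1)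
  have htail : Tendsto (fun m => ∑ n ∈ Finset.range m, ‖z j n‖) atTop (𝓝 ‖z j‖) := by
    rw [lp.norm_eq_tsum_norm_of_one]
    exact (lp.summable_norm_of_one (z j)).hasSum.tendsto_sum_nat
  obtain ⟨m, hmtail, hm⟩ := ((htail.eventually_const_lt (sub_lt_self _ (half_pos hδ))).and
    (eventually_gt_atTop m₀)).exists
  refine ⟨j, hj, m, hm, hjε, ?_⟩
  rw [Finset.sum_Ico_eq_sub _ hm.le]
  linarith

lemma exists_gliding_hump (hcoord : ∀ n, Tendsto (fun j => z j n) atTop (𝓝 0))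
    (hfreq : ∃ᶠ j in atTop, ε ≤ ‖z j‖) (hδ : 0 < δ) :
    ∃ j m : ℕ → ℕ, StrictMono j ∧ StrictMono m ∧ ∀ i, ε ≤ ‖z (j i)‖ ∧
      ‖z (j i)‖ < ∑ n ∈ Finset.Ico (m i) (m (i + 1)), ‖z (j i) n‖ + δ := by
  choose J hJ M hM hump using exists_concentrated_on_Ico hcoord hfreq hδ
  let g : ℕ → ℕ × ℕ := fun i => (fun p => (J p.1 p.2, M p.1 p.2))^[i] (0, 0)
  have hg : ∀ i, g (i + 1) = (J (g i).1 (g i).2, M (g i).1 (g i).2) := fun i =>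
    Function.iterate_succ_apply' _ _ _
  refine ⟨fun i => (g (i + 1)).1, fun i => (g i).2, strictMono_nat_of_lt_succ fun i => ?_,
    strictMono_nat_of_lt_succ fun i => ?_, fun i => ?_⟩
  · simp only [hg (i + 1)]
    exact hJ _ _
  · simp only [hg i]
    exact hM _ _
  · simp only [hg i]
    exact hump _ _

theorem tendsto_norm_zero_of_forall_tendsto_dual
    (hz : ∀ φ : ℓ¹(ℕ, ℝ) →L[ℝ] ℝ, Tendsto (fun j => φ (z j)) atTop (𝓝 0)) :
    Tendsto (fun j => ‖z j‖) atTop (𝓝 0) := by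
  have hcoord : ∀ n, Tendsto (fun j => z j n) atTop (𝓝 0) := fun n => hz (lp.evalCLM ℝ _ 1 n)
  by_contra hne
  obtain ⟨ε, hε, hfreq⟩ : ∃ ε > 0, ∃ᶠ j in atTop, ε ≤ ‖z j‖ := by
    simpa [Metric.tendsto_nhds, frequently_atTop] using hne
  obtain ⟨j, m, hj, hm, hump⟩ := exists_gliding_hump hcoord hfreq (δ := ε / 4) (by positivity)
  obtain ⟨φ, hφ⟩ := exists_dual_two_mul_sum_Ico_sub_norm_le (fun i => z (j i)) hm
  obtain ⟨i, hi⟩ := (((hz φ).comp hj.tendsto_atTop).eventually_lt_const (half_pos hε)).exists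
  obtain ⟨hnorm, hconc⟩ := hump i
  linarith [hφ i, show φ (z (j i)) < ε / 2 from hi]

end GlidingHump

/-- **Schur property of `ℓ¹`**: every weakly convergent sequence in `ℓ¹` converges in norm. -/
theorem stmt17 (x : ℕ → lp (fun _ : ℕ => ℝ) 1) (y : lp (fun _ : ℕ => ℝ) 1)
    (h : Tendsto x atTop (@nhds _ (weakTop (lp (fun _ : ℕ => ℝ) 1)) y)) :
    Tendsto x atTop (nhds y) := by
  have hdual : ∀ φ : ℓ¹(ℕ, ℝ) →L[ℝ] ℝ, Tendsto (fun k => φ (x k)) atTop (𝓝 (φ y)) :=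
    fun φ => ((WeakBilin.eval_continuous _ φ).tendsto y).comp h
  rw [tendsto_iff_norm_sub_tendsto_zero]
  exact tendsto_norm_zero_of_forall_tendsto_dual fun φ => by
    simpa using (hdual φ).sub_const (φ y)
end

section
/- Let P be a real Banach space containing an isomorphic copy of l¹. Then the dual space P* does not have the Schur property. (Pethe–Thakare.) -/
/-!
Let `f : ℓ¹ → P` satisfy `c ‖x‖ ≤ ‖f x‖`. For every point `τ` of the Cantor cube, Hahn–Banach
extends `f x ↦ ∑ₖ rₖ(τ) xₖ` to some `E_τ ∈ P*` with `‖E_τ‖ ≤ c⁻¹`, where `rₖ` are the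
Rademacher functions. Averaging `rₙ(τ) E_τ` over the cube and taking a weak* limit along an
ultrafilter produces `φₙ ∈ P*` with `φₙ (f eₙ) = 1`, so `‖φₙ‖ ≥ ‖f‖⁻¹`. On the other hand,
orthogonality of the `rₙ` and Cauchy–Schwarz give the upper `ℓ²`-estimate
`‖∑ aₙ φₙ‖ ≤ c⁻¹ (∑ aₙ²)^{1/2}`; testing it against `aₙ = Θ(φₙ)` for `Θ ∈ P**` shows that
`(Θ(φₙ))` is square-summable, so `(φₙ)` is weakly null.
-/

open Topology Filter

open Finset
open scoped ENNReal

/-- A point of the Cantor cube `{±1}^ℕ` with finitely many `-1`s is encoded by the set of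
those coordinates. -/
def rademacher (n : ℕ) (τ : Finset ℕ) : ℝ := if n ∈ τ then -1 else 1

theorem rademacher_mul_self (n : ℕ) (τ : Finset ℕ) : rademacher n τ * rademacher n τ = 1 := by
  unfold rademacher; split_ifs <;> norm_num

theorem abs_rademacher (n : ℕ) (τ : Finset ℕ) : |rademacher n τ| = 1 := by
  unfold rademacher; split_ifs <;> norm_num

theorem sum_powerset_rademacher_mul_of_ne {S : Finset ℕ} {n k : ℕ} (hn : n ∈ S) (hnk : n ≠ k) :
    ∑ τ ∈ S.powerset, rademacher n τ * rademacher k τ = 0 := by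
  rw [← insert_erase hn, sum_powerset_insert (notMem_erase n S), ← sum_add_distrib]
  refine sum_eq_zero fun τ hτ ↦ ?_
  have hnτ : n ∉ τ := fun h ↦ notMem_erase n S (mem_powerset.mp hτ h)
  by_cases hk : k ∈ τ <;> simp [rademacher, hnτ, hk, Ne.symm hnk]

theorem sum_powerset_rademacher_mul {S : Finset ℕ} {n k : ℕ} (hn : n ∈ S) :
    ∑ τ ∈ S.powerset, rademacher n τ * rademacher k τ = if n = k then 2 ^ S.card else 0 := by
  split_ifs with hnk
  · simp [hnk, rademacher_mul_self]
  · exact sum_powerset_rademacher_mul_of_ne hn hnk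

theorem sum_powerset_sq_sum_rademacher {S F : Finset ℕ} (hF : F ⊆ S) (a : ℕ → ℝ) :
    ∑ τ ∈ S.powerset, (∑ n ∈ F, a n * rademacher n τ) ^ 2 = 2 ^ S.card * ∑ n ∈ F, a n ^ 2 := by
  simp_rw [sq, sum_mul_sum, sum_comm (s := S.powerset), mul_mul_mul_comm, ← mul_sum]
  rw [mul_sum]
  refine sum_congr rfl fun n hn ↦ ?_
  simp_rw [sum_powerset_rademacher_mul (hF hn), mul_ite, mul_zero, sum_ite_eq, if_pos hn]
  ring

theorem sum_powerset_abs_sum_rademacher_le {S F : Finset ℕ} (hF : F ⊆ S) (a : ℕ → ℝ) :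
    ∑ τ ∈ S.powerset, |∑ n ∈ F, a n * rademacher n τ| ≤ 2 ^ S.card * √(∑ n ∈ F, a n ^ 2) := by
  have h := sq_sum_le_card_mul_sum_sq (s := S.powerset)
    (f := fun τ ↦ |∑ n ∈ F, a n * rademacher n τ|)
  simp only [sq_abs, sum_powerset_sq_sum_rademacher hF, card_powerset, Nat.cast_pow,
    Nat.cast_ofNat] at h
  refine le_of_pow_le_pow_left₀ two_ne_zero (by positivity) ?_
  rw [mul_pow, Real.sq_sqrt (sum_nonneg fun n _ ↦ sq_nonneg (a n))]
  linarith

section Average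

variable {V : Type*}

noncomputable def rademacherAverage [AddCommGroup V] [Module ℝ V] (E : Finset ℕ → V)
    (S : Finset ℕ) (n : ℕ) : V :=
  (2 ^ S.card : ℝ)⁻¹ • ∑ τ ∈ S.powerset, rademacher n τ • E τ

theorem sum_smul_rademacherAverage [AddCommGroup V] [Module ℝ V] (E : Finset ℕ → V)
    (S F : Finset ℕ) (a : ℕ → ℝ) :
    ∑ n ∈ F, a n • rademacherAverage E S n =
      (2 ^ S.card : ℝ)⁻¹ • ∑ τ ∈ S.powerset, (∑ n ∈ F, a n * rademacher n τ) • E τ := by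
  simp only [rademacherAverage, smul_sum, sum_smul, smul_smul]
  rw [sum_comm]
  exact sum_congr rfl fun τ _ ↦ sum_congr rfl fun n _ ↦ by ring_nf

theorem norm_sum_smul_rademacherAverage_le [NormedAddCommGroup V] [NormedSpace ℝ V]
    {E : Finset ℕ → V} {C : ℝ} (hE : ∀ τ, ‖E τ‖ ≤ C) {S F : Finset ℕ} (hF : F ⊆ S)
    (a : ℕ → ℝ) :
    ‖∑ n ∈ F, a n • rademacherAverage E S n‖ ≤ C * √(∑ n ∈ F, a n ^ 2) := by
  have hC : 0 ≤ C := (norm_nonneg _).trans (hE ∅)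
  rw [sum_smul_rademacherAverage, norm_smul, norm_inv, norm_pow, Real.norm_two]
  calc (2 ^ S.card : ℝ)⁻¹ * ‖∑ τ ∈ S.powerset, (∑ n ∈ F, a n * rademacher n τ) • E τ‖
      ≤ (2 ^ S.card : ℝ)⁻¹ * ((∑ τ ∈ S.powerset, |∑ n ∈ F, a n * rademacher n τ|) * C) := by
        rw [sum_mul]
        gcongr
        refine (norm_sum_le _ _).trans (sum_le_sum fun τ _ ↦ ?_)
        rw [norm_smul, Real.norm_eq_abs]
        gcongr
        exact hE τ
    _ ≤ (2 ^ S.card : ℝ)⁻¹ * (2 ^ S.card * √(∑ n ∈ F, a n ^ 2) * C) := by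
        gcongr
        exact sum_powerset_abs_sum_rademacher_le hF a
    _ = C * √(∑ n ∈ F, a n ^ 2) := by field_simp

end Average

namespace lp

variable {α : Type*}

noncomputable def inftyToDualOne :
    lp (fun _ : α ↦ ℝ) ∞ →L[ℝ] StrongDual ℝ (lp (fun _ : α ↦ ℝ) 1) :=
  dualPairing ∞ 1 (fun _ ↦ ContinuousLinearMap.mul ℝ ℝ) (K := 1) fun _ ↦ by
    simpa only [NNReal.coe_one] using ContinuousLinearMap.opNorm_mul_le ℝ ℝ

theorem norm_inftyToDualOne_apply_le (s : lp (fun _ : α ↦ ℝ) ∞) : ‖inftyToDualOne s‖ ≤ ‖s‖ :=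
  (inftyToDualOne.le_opNorm s).trans <| mul_le_of_le_one_left (norm_nonneg s)
    (norm_dualPairing (K := 1) _ _)

theorem inftyToDualOne_apply_single [DecidableEq α] (s : lp (fun _ : α ↦ ℝ) ∞) (n : α) :
    inftyToDualOne s (lp.single 1 n 1) = s n := by
  rw [inftyToDualOne, dualPairing_apply, tsum_eq_single n fun i hi ↦ by simp [hi]]
  simp

end lp

def rademacherSeq (τ : Finset ℕ) : lp (fun _ : ℕ ↦ ℝ) ∞ :=
  ⟨fun n ↦ rademacher n τ, memℓp_infty ⟨1, by rintro _ ⟨n, rfl⟩; simp [abs_rademacher]⟩⟩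

theorem norm_rademacherSeq_le (τ : Finset ℕ) : ‖rademacherSeq τ‖ ≤ 1 :=
  lp.norm_le_of_forall_le zero_le_one fun n ↦ by simp [rademacherSeq, abs_rademacher]

theorem StrongDual.exists_comp_eq_of_le_norm_apply {X P : Type*} [NormedAddCommGroup X]
    [NormedSpace ℝ X] [NormedAddCommGroup P] [NormedSpace ℝ P] (f : X →L[ℝ] P) {c : ℝ}
    (hc : 0 < c) (hf : ∀ x, c * ‖x‖ ≤ ‖f x‖) (g : StrongDual ℝ X) :
    ∃ E : StrongDual ℝ P, E ∘L f = g ∧ ‖E‖ ≤ c⁻¹ * ‖g‖ := by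
  have hinj : Function.Injective f := fun x y hxy ↦ by
    have hxy' := hf (x - y)
    rw [map_sub, hxy, sub_self, norm_zero, mul_nonpos_iff_pos_imp_nonpos] at hxy'
    exact sub_eq_zero.mp (norm_le_zero_iff.mp (hxy'.1 hc))
  let e := LinearEquiv.ofInjective f.toLinearMap hinj
  have he : ∀ y, f (e.symm y) = y := fun y ↦ congrArg Subtype.val (e.apply_symm_apply y)
  let h : StrongDual ℝ (LinearMap.range f.toLinearMap) :=
    (g.toLinearMap.comp e.symm.toLinearMap).mkContinuous (c⁻¹ * ‖g‖) fun y ↦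
      calc ‖g (e.symm y)‖ ≤ ‖g‖ * ‖e.symm y‖ := g.le_opNorm _
        _ ≤ ‖g‖ * (c⁻¹ * ‖y‖) := by
          gcongr
          rw [le_inv_mul_iff₀ hc, Submodule.coe_norm, ← he y]
          exact hf _
        _ = c⁻¹ * ‖g‖ * ‖y‖ := by ring
  obtain ⟨E, hEh, hE⟩ := exists_extension_norm_eq _ h
  refine ⟨E, ContinuousLinearMap.ext fun x ↦ ?_,
    hE ▸ LinearMap.mkContinuous_norm_le _ (by positivity) _⟩
  have hex : (e x : P) = f x := LinearEquiv.ofInjective_apply _ x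
  simpa [h, hex] using hEh (e x)

section Ultrafilter

variable {E ι : Type*} [NormedAddCommGroup E] [NormedSpace ℝ E]

theorem StrongDual.exists_tendsto_ultrafilter_of_norm_le (U : Ultrafilter ι)
    (g : ι → StrongDual ℝ E) {C : ℝ} (hg : ∀ᶠ i in U, ‖g i‖ ≤ C) :
    ∃ φ : StrongDual ℝ E, ∀ x, Tendsto (fun i ↦ g i x) U (𝓝 (φ x)) := by
  obtain ⟨φ, -, hφ⟩ := (WeakDual.isCompact_closedBall (𝕜 := ℝ) 0 C).ultrafilter_le_nhds
    (U.map (StrongDual.toWeakDual ∘ g)) (le_principal_iff.mpr <| Ultrafilter.mem_map.mpr <|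
      hg.mono fun _ ↦ mem_closedBall_zero_iff.mpr)
  exact ⟨WeakDual.toStrongDual φ, fun x ↦ ((WeakDual.eval_continuous x).tendsto φ).comp hφ⟩

theorem StrongDual.norm_le_of_tendsto {l : Filter ι} [l.NeBot] {g : ι → StrongDual ℝ E}
    {φ : StrongDual ℝ E} (h : ∀ x, Tendsto (fun i ↦ g i x) l (𝓝 (φ x))) {C : ℝ} (hC : 0 ≤ C)
    (hg : ∀ᶠ i in l, ‖g i‖ ≤ C) : ‖φ‖ ≤ C :=
  ContinuousLinearMap.opNorm_le_bound _ hC fun x ↦ le_of_tendsto (h x).norm <|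
    hg.mono fun _ hi ↦ (g _).le_of_opNorm_le hi x

end Ultrafilter

theorem exists_dual_seq_apply_eq_one_and_norm_sum_smul_le {P : Type*} [NormedAddCommGroup P]
    [NormedSpace ℝ P] (f : lp (fun _ : ℕ ↦ ℝ) 1 →L[ℝ] P) {c : ℝ} (hc : 0 < c)
    (hf : ∀ x, c * ‖x‖ ≤ ‖f x‖) :
    ∃ φ : ℕ → StrongDual ℝ P, (∀ n, φ n (f (lp.single 1 n 1)) = 1) ∧
      ∀ (F : Finset ℕ) (a : ℕ → ℝ), ‖∑ n ∈ F, a n • φ n‖ ≤ c⁻¹ * √(∑ n ∈ F, a n ^ 2) := by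
  choose E hEf hE using fun τ ↦
    StrongDual.exists_comp_eq_of_le_norm_apply f hc hf (lp.inftyToDualOne (rademacherSeq τ))
  have hEle : ∀ τ, ‖E τ‖ ≤ c⁻¹ := fun τ ↦ (hE τ).trans <| mul_le_of_le_one_right
    (inv_nonneg.mpr hc.le) ((lp.norm_inftyToDualOne_apply_le _).trans (norm_rademacherSeq_le τ))
  have hEe : ∀ τ n, E τ (f (lp.single 1 n 1)) = rademacher n τ := fun τ n ↦ by
    rw [← ContinuousLinearMap.comp_apply, hEf, lp.inftyToDualOne_apply_single]
    rfl
  let U := Ultrafilter.of (atTop : Filter (Finset ℕ))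
  have hU : ∀ F : Finset ℕ, ∀ᶠ S in (U : Filter (Finset ℕ)), F ⊆ S := fun F ↦
    Ultrafilter.of_le _ (eventually_ge_atTop F)
  have hbound : ∀ n, ∀ᶠ S in (U : Filter (Finset ℕ)), ‖rademacherAverage E S n‖ ≤ c⁻¹ :=
    fun n ↦ (hU {n}).mono fun S hS ↦ by
      simpa using norm_sum_smul_rademacherAverage_le hEle hS 1
  choose φ hφ using fun n ↦
    StrongDual.exists_tendsto_ultrafilter_of_norm_le U (rademacherAverage E · n) (hbound n)
  refine ⟨φ, fun n ↦ ?_, fun F a ↦ ?_⟩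
  · refine tendsto_nhds_unique (hφ n _) (tendsto_const_nhds.congr fun S ↦ ?_)
    simp [rademacherAverage, hEe, rademacher_mul_self]
  · refine StrongDual.norm_le_of_tendsto (fun x ↦ ?_) (by positivity) <|
      (hU F).mono fun S hS ↦ norm_sum_smul_rademacherAverage_le hEle hS a
    simpa using tendsto_finsetSum F fun n _ ↦ (hφ n x).const_mul (a n)

theorem tendsto_dual_apply_zero_of_norm_sum_smul_le {X : Type*} [NormedAddCommGroup X]
    [NormedSpace ℝ X] {x : ℕ → X} {K : ℝ}
    (h : ∀ (F : Finset ℕ) (a : ℕ → ℝ), ‖∑ n ∈ F, a n • x n‖ ≤ K * √(∑ n ∈ F, a n ^ 2))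
    (Θ : StrongDual ℝ X) : Tendsto (fun n ↦ Θ (x n)) atTop (𝓝 0) := by
  have hsum : ∀ F : Finset ℕ, ∑ n ∈ F, Θ (x n) ^ 2 ≤ (‖Θ‖ * K) ^ 2 := fun F ↦ by
    set A := ∑ n ∈ F, Θ (x n) ^ 2
    have hA : A ≤ ‖Θ‖ * K * √A :=
      calc A = Θ (∑ n ∈ F, Θ (x n) • x n) := by simp [A, map_sum, sq]
        _ ≤ ‖Θ‖ * ‖∑ n ∈ F, Θ (x n) • x n‖ := (le_abs_self _).trans (Θ.le_opNorm _)
        _ ≤ ‖Θ‖ * K * √A := by rw [mul_assoc]; gcongr; exact h F _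
    have hsqrt := Real.sq_sqrt (sum_nonneg fun n _ ↦ sq_nonneg (Θ (x n)) : 0 ≤ A)
    nlinarith [sq_nonneg (‖Θ‖ * K - √A), Real.sqrt_nonneg A]
  have hsq := (summable_of_sum_le (fun n ↦ sq_nonneg (Θ (x n))) hsum).tendsto_atTop_zero
  refine tendsto_zero_iff_abs_tendsto_zero _ |>.mpr ?_
  simpa [Function.comp_def, Real.sqrt_sq_eq_abs] using hsq.sqrt

theorem tendsto_weakTop_of_forall_dual {Y ι : Type*} [NormedAddCommGroup Y] [NormedSpace ℝ Y]
    {l : Filter ι} {x : ι → Y} {y : Y}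
    (h : ∀ Θ : StrongDual ℝ Y, Tendsto (fun i ↦ Θ (x i)) l (𝓝 (Θ y))) :
    Tendsto x l (@nhds _ (weakTop Y) y) := by
  change Tendsto x l (@nhds _ (TopologicalSpace.induced _ Pi.topologicalSpace) y)
  rw [nhds_induced, tendsto_comap_iff]
  exact tendsto_pi_nhds.mpr h

theorem stmt18_general {P : Type*} [NormedAddCommGroup P] [NormedSpace ℝ P]
    (h : ∃ (f : lp (fun _ : ℕ => ℝ) 1 →L[ℝ] P) (c : ℝ), 0 < c ∧
      ∀ x : lp (fun _ : ℕ => ℝ) 1, c * ‖x‖ ≤ ‖f x‖) :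
    ¬ ∀ (φ : ℕ → StrongDual ℝ P) (ψ : StrongDual ℝ P),
        Tendsto φ atTop (@nhds _ (weakTop (StrongDual ℝ P)) ψ) →
          Tendsto φ atTop (nhds ψ) := by
  obtain ⟨f, c, hc, hf⟩ := h
  obtain ⟨φ, hφe, hφF⟩ := exists_dual_seq_apply_eq_one_and_norm_sum_smul_le f hc hf
  intro hSchur
  have hweak : Tendsto φ atTop (@nhds _ (weakTop (StrongDual ℝ P)) 0) :=
    tendsto_weakTop_of_forall_dual fun Θ ↦ by
      simpa using tendsto_dual_apply_zero_of_norm_sum_smul_le hφF Θ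
  have hφf : Tendsto (fun n ↦ φ n (f (lp.single 1 n 1))) atTop (𝓝 0) := by
    refine squeeze_zero_norm (fun n ↦ ?_) (by simpa using ((hSchur φ 0 hweak).norm.mul_const ‖f‖))
    have hfe : ‖f (lp.single 1 n 1)‖ ≤ ‖f‖ := by
      simpa [lp.norm_single] using f.le_opNorm (lp.single 1 n 1)
    exact (φ n).le_of_opNorm_le_of_le le_rfl hfe
  simp only [hφe] at hφf
  exact one_ne_zero (tendsto_nhds_unique tendsto_const_nhds hφf)

/-- **Pethe–Thakare**: if a Banach space `P` contains an isomorphic copy of `ℓ¹`, then its dual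
`P*` does not have the Schur property. -/
theorem stmt18 {P : Type*} [NormedAddCommGroup P] [NormedSpace ℝ P] [CompleteSpace P]
    (h : ∃ (f : lp (fun _ : ℕ => ℝ) 1 →L[ℝ] P) (c : ℝ), 0 < c ∧
      ∀ x : lp (fun _ : ℕ => ℝ) 1, c * ‖x‖ ≤ ‖f x‖) :
    ¬ ∀ (φ : ℕ → StrongDual ℝ P) (ψ : StrongDual ℝ P),
        Tendsto φ atTop (@nhds _ (weakTop (StrongDual ℝ P)) ψ) →
          Tendsto φ atTop (nhds ψ) :=
  stmt18_general h
end
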